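/- arXiv:2403.03904 — 9 statements merged into one kernel-verified Lean document; each statement's English description precedes it below -/
import Mathlib

section
/- If f : F → E is a nearly continuous map between topological spaces and g : G → F is continuous and feebly open, then the composition f ∘ g : G → E is nearly continuous. -/
/-- A map is nearly continuous if preimages of open sets are contained
in the interior of their closures. -/
def NearlyContinuous {F E : Type*} [TopologicalSpace F] [TopologicalSpace E]
    (f : F → E) : Prop :=
  ∀ V : Set E, IsOpen V → f ⁻¹' V ⊆ interior (closure (f ⁻¹' V))

/-- A map is feebly open if the image of every nonempty open set has
nonempty interior. -/
def FeeblyOpen {G F : Type*} [TopologicalSpace G] [TopologicalSpace F]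
    (g : G → F) : Prop :=
  ∀ U : Set G, IsOpen U → U.Nonempty → (interior (g '' U)).Nonempty

theorem nearlyContinuous_comp_of_continuous_feeblyOpen
    {G F E : Type*} [TopologicalSpace G] [TopologicalSpace F] [TopologicalSpace E]
    (f : F → E) (g : G → F)
    (hf : NearlyContinuous f) (hgc : Continuous g) (hgo : FeeblyOpen g) :
    NearlyContinuous (f ∘ g) := by
  intro V hV x hx
  set W : Set G := g ⁻¹' (interior (closure (f ⁻¹' V))) with hW
  have hWopen : IsOpen W := (isOpen_interior).preimage hgc
  have hxW : x ∈ W := hf V hV hx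
  -- It suffices to show W ⊆ closure ((f ∘ g) ⁻¹' V)
  have hsub : W ⊆ closure ((f ∘ g) ⁻¹' V) := by
    intro y hy
    rw [mem_closure_iff]
    intro U hU hyU
    by_contra hne
    rw [Set.not_nonempty_iff_eq_empty] at hne
    have hUW : IsOpen (U ∩ W) := hU.inter hWopen
    have hUWne : (U ∩ W).Nonempty := ⟨y, hyU, hy⟩
    obtain ⟨t, ht⟩ := hgo (U ∩ W) hUW hUWne
    have hTopen : IsOpen (interior (g '' (U ∩ W))) := isOpen_interior
    have hTsub : interior (g '' (U ∩ W)) ⊆ closure (f ⁻¹' V) := by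
      refine interior_subset.trans ?_
      rintro _ ⟨z, ⟨_, hzW⟩, rfl⟩
      exact interior_subset hzW
    -- an open nonempty set inside the closure meets f ⁻¹' V
    have := (mem_closure_iff.mp (hTsub ht)) _ hTopen ht
    obtain ⟨p, hpT, hpV⟩ := this
    obtain ⟨z, hzUW, rfl⟩ := interior_subset hpT
    have : z ∈ U ∩ (f ∘ g) ⁻¹' V := ⟨hzUW.1, hpV⟩
    rw [hne] at this
    exact this
  exact interior_maximal hsub hWopen hxW
end

section
/- If f : F → E is a separating map between Hausdorff spaces, then the graph of f is closed in F × E. -/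
/-- A map `f : F → E` is separating if distinct points of `E` have open
neighborhoods whose preimages are "strongly disjoint". -/
def Separating {F E : Type*} [TopologicalSpace F] [TopologicalSpace E]
    (f : F → E) : Prop :=
  ∀ x y : E, x ≠ y → ∃ Vx Vy : Set E, IsOpen Vx ∧ IsOpen Vy ∧ x ∈ Vx ∧ y ∈ Vy ∧
    closure (f ⁻¹' Vx) ∩ f ⁻¹' Vy = ∅ ∧ f ⁻¹' Vx ∩ closure (f ⁻¹' Vy) = ∅

theorem separating_closed_graph
    {F E : Type*} [TopologicalSpace F] [TopologicalSpace E]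
    [T2Space F] [T2Space E] (f : F → E) (hf : Separating f) :
    IsClosed {p : F × E | p.2 = f p.1} := by
  rw [← isOpen_compl_iff]
  rw [isOpen_iff_mem_nhds]
  rintro ⟨a, b⟩ hab
  simp only [Set.mem_compl_iff, Set.mem_setOf_eq] at hab
  obtain ⟨Vx, Vy, hVxo, hVyo, hfa, hb, h1, h2⟩ := hf (f a) b (fun h => hab h.symm)
  have ha : a ∉ closure (f ⁻¹' Vy) := by
    intro h
    exact Set.eq_empty_iff_forall_notMem.mp h2 a ⟨hfa, h⟩
  have : ((closure (f ⁻¹' Vy))ᶜ ×ˢ Vy : Set (F × E)) ∈ nhds (a, b) := by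
    apply IsOpen.mem_nhds (IsOpen.prod (isOpen_compl_iff.mpr isClosed_closure) hVyo)
    exact Set.mem_prod.mpr ⟨ha, hb⟩
  filter_upwards [this]
  rintro ⟨p, q⟩ ⟨hp, hq⟩ heq
  simp only [Set.mem_setOf_eq] at heq
  refine hp (subset_closure ?_)
  rw [Set.mem_preimage, ← heq]
  exact hq
end

section
/- For a topological space F, the following are equivalent: (i) every dense subset of F is open; (ii) for every topological space E and every nearly continuous map f : F → E, f is continuous. -/
lemma sierpinski_open_false {V : Set Prop} (h : IsOpen V) (hF : False ∈ V) : True ∈ V := by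
  induction h with
  | basic s hs => simp_all
  | univ => trivial
  | inter s t _ _ ihs iht => exact ⟨ihs hF.1, iht hF.2⟩
  | sUnion S _ ih =>
      obtain ⟨s, hs, hFs⟩ := hF
      exact ⟨s, hs, ih s hs hFs⟩

theorem dense_open_iff_nearlyContinuous_continuous
    {F : Type*} [TopologicalSpace F] :
    (∀ D : Set F, Dense D → IsOpen D) ↔
      (∀ (E : Type) (_ : TopologicalSpace E) (f : F → E),
        NearlyContinuous f → Continuous f) := by
  constructor
  · intro hD E _ f hf
    rw [continuous_def]
    intro V hV
    set A := f ⁻¹' V with hA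
    have hsub : A ⊆ interior (closure A) := hf V hV
    set U := interior (closure A) with hU
    have hdense : Dense (A ∪ Uᶜ) := by
      intro x
      rcases Classical.em (x ∈ U) with hx | hx
      · have : U ⊆ closure A := interior_subset
        exact closure_mono Set.subset_union_left (this hx)
      · exact subset_closure (Or.inr hx)
    have hopen : IsOpen (A ∪ Uᶜ) := hD _ hdense
    have : A = (A ∪ Uᶜ) ∩ U := by
      ext x
      constructor
      · intro hx; exact ⟨Or.inl hx, hsub hx⟩
      · rintro ⟨(hx | hx), hxU⟩
        · exact hx
        · exact absurd hxU hx
    rw [this]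
    exact hopen.inter isOpen_interior
  · intro h D hDense
    rw [isOpen_iff_continuous_mem]
    apply h Prop _ (· ∈ D)
    intro V hV x hx
    by_cases hF : False ∈ V
    · have hT : True ∈ V := sierpinski_open_false hV hF
      have : (· ∈ D) ⁻¹' V = Set.univ := by
        ext y
        simp only [Set.mem_preimage, Set.mem_univ, iff_true]
        by_cases hy : y ∈ D
        · simpa [eq_true hy] using hT
        · simpa [eq_false hy] using hF
      rw [this]
      simp
    · have : x ∈ D := by
        by_contra hxD
        exact hF (by simpa [eq_false hxD] using hx)
      have hsub : (· ∈ D) ⁻¹' V ⊆ closure ((· ∈ D) ⁻¹' V) := subset_closure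
      have : closure ((· ∈ D) ⁻¹' V) = Set.univ := by
        have hDV : D ⊆ (· ∈ D) ⁻¹' V := by
          intro y hy
          simpa [eq_true hy] using (by simpa [eq_true ‹x ∈ D›] using hx : True ∈ V)
        exact Set.eq_univ_of_univ_subset (hDense.closure_eq ▸ closure_mono hDV)
      rw [this]
      simp
end

section
/- If f : F → E has closed graph and maps compact sets to compact sets, and F is a k-space, then f is continuous. -/
theorem continuous_of_closed_graph_compact_images_kspace
    {F E : Type*} [TopologicalSpace F] [TopologicalSpace E]
    [T2Space F] [T2Space E]
    (f : F → E)
    (hgraph : IsClosed {q : F × E | q.2 = f q.1})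
    (hcomp : ∀ K : Set F, IsCompact K → IsCompact (f '' K))
    (hk : ∀ A : Set F, (∀ K : Set F, IsCompact K → IsClosed (A ∩ K)) → IsClosed A) :
    Continuous f := by
  rw [continuous_iff_isClosed]
  intro C hC
  apply hk
  intro K hK
  have hfK : IsCompact (f '' K) := hcomp K hK
  set S : Set (F × E) := {q : F × E | q.2 = f q.1} ∩ (K ×ˢ (f '' K ∩ C)) with hS
  have hSclosed : IsClosed S :=
    hgraph.inter ((hK.isClosed).prod ((hfK.isClosed).inter hC))
  have hScomp : IsCompact S := by
    apply (hK.prod hfK).of_isClosed_subset hSclosed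
    rintro ⟨x, y⟩ ⟨-, hx, hy, -⟩
    exact ⟨hx, hy⟩
  have himg : Prod.fst '' S = f ⁻¹' C ∩ K := by
    ext x
    constructor
    · rintro ⟨⟨a, b⟩, ⟨hb, ha, -, hbC⟩, rfl⟩
      exact ⟨show f a ∈ C from hb ▸ hbC, ha⟩
    · rintro ⟨hxC, hxK⟩
      exact ⟨(x, f x), ⟨rfl, hxK, ⟨x, hxK, rfl⟩, hxC⟩, rfl⟩
  rw [← himg]
  exact (hScomp.image continuous_fst).isClosed
end

section
/- If F is semi-regular, then the Alexandrov duplicate of F is semi-regular. -/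
/-- A space is semi-regular if its regular-open sets form a base of the topology. -/
def SemiRegular (X : Type*) [TopologicalSpace X] : Prop :=
  TopologicalSpace.IsTopologicalBasis {U : Set X | U = interior (closure U)}

/-- The topology of the Alexandrov duplicate of `F`, on the point set `F × Bool`,
where `(x, false)` plays the role of `(x,1)` (the open copy) and `(x, true)` of
`(x,2)`. -/
def dupTopology (F : Type*) [TopologicalSpace F] : TopologicalSpace (F × Bool) :=
  TopologicalSpace.generateFrom
    ({S | ∃ x : F, S = {(x, false)}} ∪
     {S | ∃ (U Y : Set F), IsOpen U ∧ Y.Finite ∧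
        S = (U ×ˢ ({true} : Set Bool)) ∪ ((U \ Y) ×ˢ ({false} : Set Bool))})

/-! The points `(x, false)` are isolated and closed, so their singletons are regular open.
A basic neighbourhood `W U Y` of `(x, true)` shrinks to `W R Y` with `R ⊆ U` regular open in
`F`, and `W R Y` is again regular open: since the projection to `F` and the section
`x ↦ (x, true)` are continuous, `interior (closure (W R Y))` meets the top copy of `F` only
inside `interior (closure R) = R`, and on the isolated points it adds nothing. -/

open TopologicalSpace Set

def IsRegularOpen {X : Type*} [TopologicalSpace X] (s : Set X) : Prop :=
  s = interior (closure s)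

section RegularOpen

variable {X : Type*} [TopologicalSpace X] {s : Set X}

theorem IsRegularOpen.isOpen (hs : IsRegularOpen s) : IsOpen s :=
  hs ▸ isOpen_interior

theorem IsClopen.isRegularOpen (hs : IsClopen s) : IsRegularOpen s := by
  rw [IsRegularOpen, hs.isClosed.closure_eq, hs.isOpen.interior_eq]

theorem isRegularOpen_of_interior_closure_subset (hs : IsOpen s)
    (h : interior (closure s) ⊆ s) : IsRegularOpen s :=
  h.antisymm' hs.subset_interior_closure

theorem mem_of_isOpen_singleton_of_mem_closure {x : X} (hx : IsOpen {x})
    (h : x ∈ closure s) : x ∈ s := by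
  obtain ⟨y, rfl, hy⟩ := mem_closure_iff.mp h {x} hx rfl
  exact hy

end RegularOpen

namespace AlexandrovDuplicate

variable {F : Type*}

def W (U Y : Set F) : Set (F × Bool) :=
  (U ×ˢ {true}) ∪ ((U \ Y) ×ˢ {false})

@[simp]
theorem mem_W_true {U Y : Set F} {x : F} : (x, true) ∈ W U Y ↔ x ∈ U := by
  simp [W]

@[simp]
theorem mem_W_false {U Y : Set F} {x : F} : (x, false) ∈ W U Y ↔ x ∈ U ∧ x ∉ Y := by
  simp [W]

theorem W_mono {U U' Y Y' : Set F} (hU : U ⊆ U') (hY : Y' ⊆ Y) : W U Y ⊆ W U' Y' := by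
  rintro ⟨x, _ | _⟩ <;> simp only [mem_W_true, mem_W_false] <;> grind

theorem W_inter_W (U V Y Z : Set F) : W U Y ∩ W V Z = W (U ∩ V) (Y ∪ Z) := by
  ext ⟨x, _ | _⟩
  · simp only [mem_inter_iff, mem_W_false, mem_union]
    tauto
  · simp only [mem_inter_iff, mem_W_true]

variable [TopologicalSpace F]

variable (F) in
def basis : Set (Set (F × Bool)) :=
  {S | ∃ x : F, S = {(x, false)}} ∪ {S | ∃ U Y : Set F, IsOpen U ∧ Y.Finite ∧ S = W U Y}

theorem eq_W_of_mem_basis {S : Set (F × Bool)} (hS : S ∈ basis F) {x : F}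
    (hx : (x, true) ∈ S) : ∃ U Y : Set F, IsOpen U ∧ Y.Finite ∧ S = W U Y := by
  rcases hS with ⟨y, rfl⟩ | hW
  · simp at hx
  · exact hW

/- In this section `F × Bool` carries the duplicate topology, not the product topology. -/
section Topology

attribute [local instance] dupTopology

theorem isTopologicalBasis : IsTopologicalBasis (basis F) where
  exists_subset_inter := by
    rintro S hS T hT ⟨x, _ | _⟩ hx
    · exact ⟨{(x, false)}, Or.inl ⟨x, rfl⟩, rfl, singleton_subset_iff.mpr hx⟩
    · obtain ⟨U, Y, hU, hY, rfl⟩ := eq_W_of_mem_basis hS hx.1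
      obtain ⟨V, Z, hV, hZ, rfl⟩ := eq_W_of_mem_basis hT hx.2
      rw [W_inter_W] at hx ⊢
      exact ⟨_, Or.inr ⟨_, _, hU.inter hV, hY.union hZ, rfl⟩, hx, subset_rfl⟩
  sUnion_eq := sUnion_eq_univ_iff.mpr fun p =>
    ⟨W univ ∅, Or.inr ⟨univ, ∅, isOpen_univ, finite_empty, rfl⟩, by
      rcases p with ⟨x, _ | _⟩ <;> simp⟩
  eq_generateFrom := rfl

theorem isOpen_W {U Y : Set F} (hU : IsOpen U) (hY : Y.Finite) : IsOpen (W U Y) :=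
  isTopologicalBasis.isOpen (Or.inr ⟨U, Y, hU, hY, rfl⟩)

theorem isClopen_singleton_false (x : F) : IsClopen {(x, false)} := by
  refine ⟨⟨?_⟩, isTopologicalBasis.isOpen (Or.inl ⟨x, rfl⟩)⟩
  convert isOpen_W isOpen_univ (finite_singleton x)
  ext ⟨y, _ | _⟩ <;> simp [eq_comm]

theorem exists_W_subset {O : Set (F × Bool)} (hO : IsOpen O) {x : F} (hx : (x, true) ∈ O) :
    ∃ U Y : Set F, IsOpen U ∧ Y.Finite ∧ x ∈ U ∧ W U Y ⊆ O := by
  obtain ⟨S, hS, hxS, hSO⟩ := isTopologicalBasis.exists_subset_of_mem_open hx hO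
  obtain ⟨U, Y, hU, hY, rfl⟩ := eq_W_of_mem_basis hS hxS
  exact ⟨U, Y, hU, hY, mem_W_true.mp hxS, hSO⟩

theorem continuous_fst : Continuous (Prod.fst : F × Bool → F) := by
  refine continuous_def.mpr fun U hU => ?_
  convert isOpen_W hU finite_empty
  ext ⟨x, _ | _⟩ <;> simp

theorem continuous_mk_true : Continuous fun x : F => (x, true) := by
  refine continuous_generateFrom_iff.mpr ?_
  rintro S (⟨y, rfl⟩ | ⟨U, Y, hU, -, rfl⟩)
  · convert isOpen_empty
    ext
    simp
  · simpa using hU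

theorem isRegularOpen_W {R Y : Set F} (hR : IsRegularOpen R) (hY : Y.Finite) :
    IsRegularOpen (W R Y) := by
  refine isRegularOpen_of_interior_closure_subset (isOpen_W hR.isOpen hY) ?_
  rintro ⟨x, _ | _⟩ hx
  · exact mem_of_isOpen_singleton_of_mem_closure (isClopen_singleton_false x).isOpen
      (interior_subset hx)
  · have hsub : (fun y : F => (y, true)) ⁻¹' interior (closure (W R Y)) ⊆ closure R :=
      fun y hy => map_mem_closure continuous_fst (interior_subset hy)
        fun p hp => by rcases p with ⟨z, _ | _⟩ <;> simp_all
    have hxR : x ∈ R := by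
      rw [hR]
      exact interior_maximal hsub (isOpen_interior.preimage continuous_mk_true) hx
    exact mem_W_true.mpr hxR

end Topology

end AlexandrovDuplicate

open AlexandrovDuplicate

theorem alexandrov_duplicate_semiRegular
    {F : Type*} [TopologicalSpace F] (h : SemiRegular F) :
    @SemiRegular (F × Bool) (dupTopology F) := by
  let := dupTopology F
  refine isTopologicalBasis_of_isOpen_of_nhds (fun U hU => IsRegularOpen.isOpen hU) ?_
  rintro ⟨x, _ | _⟩ O hxO hO
  · exact ⟨_, (isClopen_singleton_false x).isRegularOpen, rfl, singleton_subset_iff.mpr hxO⟩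
  · obtain ⟨U, Y, hU, hY, hxU, hWO⟩ := exists_W_subset hO hxO
    obtain ⟨R, hR, hxR, hRU⟩ := h.exists_subset_of_mem_open hxU hU
    exact ⟨W R Y, isRegularOpen_W hR hY, mem_W_true.mpr hxR, (W_mono hRU subset_rfl).trans hWO⟩
end

section
/- Let E be a Hausdorff space in which every point is isolated except possibly two points y and z. Then every nearly continuous map f : F → E with closed graph, from any topological space F, is continuous. -/
/-!
For `V` open, `f ⁻¹' V` differs from the open set `interior (closure (f ⁻¹' V))` only by points
`x` with `f x ∉ V`. If `f x` is isolated, the fiber of `f x` is a clopen neighbourhood of `x`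
disjoint from `f ⁻¹' V`, so `x` is not in that interior. The remaining points lie in the
fibers over the finitely many non-isolated points outside `V`, a closed set that can be removed
without losing openness.
-/

section

variable {F E : Type*} [TopologicalSpace F] [TopologicalSpace E] {f : F → E}

theorem isClosed_preimage_singleton_of_isClosed_graph
    (hgraph : IsClosed {q : F × E | q.2 = f q.1}) (c : E) : IsClosed (f ⁻¹' {c}) := by
  have hfiber : f ⁻¹' {c} = (fun x : F => (x, c)) ⁻¹' {q : F × E | q.2 = f q.1} := by
    ext x
    simp [eq_comm]
  rw [hfiber]
  exact hgraph.preimage (Continuous.prodMk_left c)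

namespace NearlyContinuous

theorem isOpen_preimage_singleton (hf : NearlyContinuous f) {c : E} (hc : IsOpen ({c} : Set E))
    (hfib : IsClosed (f ⁻¹' {c})) : IsOpen (f ⁻¹' {c}) := by
  have h := hf {c} hc
  rw [hfib.closure_eq] at h
  exact interior_eq_iff_isOpen.mp (interior_subset.antisymm h)

theorem continuous_of_finite_nonisolated (hf : NearlyContinuous f) {S : Set E} (hS : S.Finite)
    (hiso : ∀ x ∉ S, IsOpen ({x} : Set E)) (hfib : ∀ c, IsClosed (f ⁻¹' {c})) : Continuous f := by
  refine continuous_def.mpr fun V hV => ?_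
  have hbad : IsClosed (f ⁻¹' (S \ V)) := by
    rw [← Set.biUnion_preimage_singleton]
    exact hS.sdiff.isClosed_biUnion fun c _ => hfib c
  suffices f ⁻¹' V = interior (closure (f ⁻¹' V)) \ f ⁻¹' (S \ V) from
    this ▸ isOpen_interior.sdiff hbad
  refine (Set.subset_sdiff.mpr ⟨hf V hV, Set.disjoint_left.mpr fun x hx h => h.2 hx⟩).antisymm ?_
  rintro x ⟨hx, hxbad⟩
  by_contra hxV
  have hxS : f x ∉ S := fun h => hxbad ⟨h, hxV⟩
  obtain ⟨u, hu, huV⟩ := mem_closure_iff.mp (interior_subset hx) _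
    (hf.isOpen_preimage_singleton (hiso _ hxS) (hfib _)) rfl
  exact hxV (Set.mem_preimage.mpr ((show f u = f x from hu) ▸ huV))

end NearlyContinuous

end

theorem closed_graph_theorem_two_nonisolated_points_general
    {F E : Type*} [TopologicalSpace F] [TopologicalSpace E]
    (y z : E) (hiso : ∀ x : E, x ≠ y → x ≠ z → IsOpen ({x} : Set E))
    (f : F → E)
    (hnc : NearlyContinuous f)
    (hgraph : IsClosed {q : F × E | q.2 = f q.1}) :
    Continuous f :=
  hnc.continuous_of_finite_nonisolated (S := {y, z}) (Set.toFinite _)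
    (fun x hx => hiso x (fun h => hx (.inl h)) (fun h => hx (.inr h)))
    (isClosed_preimage_singleton_of_isClosed_graph hgraph)

theorem closed_graph_theorem_two_nonisolated_points
    {F E : Type*} [TopologicalSpace F] [TopologicalSpace E] [T2Space E]
    (y z : E) (hiso : ∀ x : E, x ≠ y → x ≠ z → IsOpen ({x} : Set E))
    (f : F → E)
    (hnc : NearlyContinuous f)
    (hgraph : IsClosed {q : F × E | q.2 = f q.1}) :
    Continuous f :=
  closed_graph_theorem_two_nonisolated_points_general y z hiso f hnc hgraph
end

section
/- Let f : F → E be nearly continuous with closed graph, where E = E₁ ⊕ L is the topological sum of a space E₁ and a locally compact Hausdorff space L. Then f⁻¹(L) is open in F, F decomposes as the topological sum f⁻¹(E₁) ⊕ f⁻¹(L), and f is continuous at every point of f⁻¹(L). -/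
/-!
If `f x` lies in `L`, every neighbourhood of `f x` contains a compact neighbourhood `K`. By the
closed graph `f⁻¹(K)` is closed, so near continuity puts `x` in the interior of the closure of
`f⁻¹(interior K)`, which lies inside `f⁻¹(K)`; hence `f` is continuous at `x`, and `f⁻¹(L)` is open.
Then `f⁻¹(E₁)`, the complement of `f⁻¹(L)`, is the preimage of an open set and is closed, so near
continuity makes it open as well.
-/

open Set Filter Topology

section

variable {F E : Type*} [TopologicalSpace F] [TopologicalSpace E] {f : F → E}

/-- `f⁻¹(K)` is the projection of the closed set `graph f ∩ (F × K)`, and projecting along the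
compact factor `K` is a closed map. -/
theorem isClosed_preimage_of_isClosed_graph (hf : IsClosed {q : F × E | q.2 = f q.1})
    {K : Set E} (hK : IsCompact K) : IsClosed (f ⁻¹' K) := by
  have : CompactSpace K := isCompact_iff_compactSpace.mp hK
  have hgraphK : IsClosed {q : F × K | (q.2 : E) = f q.1} :=
    hf.preimage (continuous_fst.prodMk (continuous_subtype_val.comp continuous_snd))
  convert isClosedMap_fst_of_compactSpace _ hgraphK using 1
  ext x
  simp

namespace NearlyContinuous

theorem preimage_subset_interior_preimage (hf : NearlyContinuous f) {U C : Set E}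
    (hU : IsOpen U) (hUC : U ⊆ C) (hC : IsClosed (f ⁻¹' C)) :
    f ⁻¹' U ⊆ interior (f ⁻¹' C) :=
  (hf U hU).trans (interior_mono (hC.closure_subset_iff.mpr (preimage_mono hUC)))

theorem isOpen_preimage_of_isClosed_preimage (hf : NearlyContinuous f) {U : Set E}
    (hU : IsOpen U) (hUf : IsClosed (f ⁻¹' U)) : IsOpen (f ⁻¹' U) :=
  subset_interior_iff_isOpen.mp (hf.preimage_subset_interior_preimage hU subset_rfl hUf)

theorem continuousAt_of_isClosed_graph (hf : NearlyContinuous f)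
    (hgraph : IsClosed {q : F × E | q.2 = f q.1}) {x : F}
    (hx : ∀ n ∈ 𝓝 (f x), ∃ K ∈ 𝓝 (f x), K ⊆ n ∧ IsCompact K) : ContinuousAt f x := by
  intro n hn
  obtain ⟨K, hKx, hKn, hK⟩ := hx n hn
  have hxK : x ∈ interior (f ⁻¹' K) :=
    hf.preimage_subset_interior_preimage isOpen_interior interior_subset
      (isClosed_preimage_of_isClosed_graph hgraph hK) (mem_interior_iff_mem_nhds.mpr hKx)
  exact mem_of_superset (mem_interior_iff_mem_nhds.mp hxK) (preimage_mono hKn)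

end NearlyContinuous

end

theorem Sum.exists_isCompact_nhds_inr {E₁ L : Type*} [TopologicalSpace E₁] [TopologicalSpace L]
    [LocallyCompactSpace L] (y : L) :
    ∀ n ∈ 𝓝 (Sum.inr y : E₁ ⊕ L), ∃ K ∈ 𝓝 (Sum.inr y), K ⊆ n ∧ IsCompact K := by
  intro n hn
  obtain ⟨K, hKy, hKn, hK⟩ :=
    local_compact_nhds (continuous_inr.continuousAt.preimage_mem_nhds hn)
  refine ⟨Sum.inr '' K, ?_, image_subset_iff.mpr hKn, hK.image continuous_inr⟩
  rw [← IsOpenEmbedding.inr.map_nhds_eq]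
  exact image_mem_map hKy

theorem closed_graph_into_sum_with_locally_compact_general
    {F E₁ L : Type*} [TopologicalSpace F] [TopologicalSpace E₁] [TopologicalSpace L]
    [LocallyCompactSpace L]
    (f : F → E₁ ⊕ L)
    (hnc : NearlyContinuous f)
    (hgraph : IsClosed {q : F × (E₁ ⊕ L) | q.2 = f q.1}) :
    IsOpen (f ⁻¹' (Set.range Sum.inr)) ∧
      IsOpen (f ⁻¹' (Set.range Sum.inl)) ∧
      ∀ x ∈ f ⁻¹' (Set.range Sum.inr), ContinuousAt f x := by
  have hcont : ∀ x ∈ f ⁻¹' range Sum.inr, ContinuousAt f x := by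
    rintro x ⟨y, hy⟩
    exact hnc.continuousAt_of_isClosed_graph hgraph (hy ▸ Sum.exists_isCompact_nhds_inr y)
  have hopenR : IsOpen (f ⁻¹' range Sum.inr) :=
    isOpen_iff_mem_nhds.mpr fun x hx => hcont x hx (isOpen_range_inr.mem_nhds hx)
  have hclosedL : IsClosed (f ⁻¹' range Sum.inl) := by
    rw [← compl_range_inr, preimage_compl]
    exact hopenR.isClosed_compl
  exact ⟨hopenR, hnc.isOpen_preimage_of_isClosed_preimage isOpen_range_inl hclosedL, hcont⟩

theorem closed_graph_into_sum_with_locally_compact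
    {F E₁ L : Type*} [TopologicalSpace F] [TopologicalSpace E₁] [TopologicalSpace L]
    [T2Space E₁] [T2Space L] [LocallyCompactSpace L]
    (f : F → E₁ ⊕ L)
    (hnc : NearlyContinuous f)
    (hgraph : IsClosed {q : F × (E₁ ⊕ L) | q.2 = f q.1}) :
    IsOpen (f ⁻¹' (Set.range Sum.inr)) ∧
      IsOpen (f ⁻¹' (Set.range Sum.inl)) ∧
      ∀ x ∈ f ⁻¹' (Set.range Sum.inr), ContinuousAt f x :=
  closed_graph_into_sum_with_locally_compact_general f hnc hgraph
end

section
/- Let f : F → E be a nearly continuous map with closed graph between topological spaces (E Hausdorff). Then the projection φ : G(f) → F, φ(x, f(x)) = x, from the graph G(f) ⊆ F × E (with subspace topology) to F, is a continuous nearly open bijection. -/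
/-- A map is nearly open if images of open sets are contained in the
interior of their closures. -/
def NearlyOpen {E F : Type*} [TopologicalSpace E] [TopologicalSpace F]
    (g : E → F) : Prop :=
  ∀ U : Set E, IsOpen U → g '' U ⊆ interior (closure (g '' U))

theorem graph_projection_continuous_nearlyOpen_bijection
    {F E : Type*} [TopologicalSpace F] [TopologicalSpace E] [T2Space E]
    (f : F → E)
    (hnc : NearlyContinuous f)
    (hgraph : IsClosed {q : F × E | q.2 = f q.1}) :
    Continuous (fun p : {q : F × E | q.2 = f q.1} => (p : F × E).1) ∧
      Function.Bijective (fun p : {q : F × E | q.2 = f q.1} => (p : F × E).1) ∧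
      NearlyOpen (fun p : {q : F × E | q.2 = f q.1} => (p : F × E).1) := by
  refine ⟨continuous_fst.comp continuous_subtype_val, ⟨?_, ?_⟩, ?_⟩
  · rintro ⟨⟨x, y⟩, hy⟩ ⟨⟨x', y'⟩, hy'⟩ h
    simp only at h
    simp only [Set.mem_setOf_eq] at hy hy'
    subst h; subst hy; subst hy'; rfl
  · intro x
    exact ⟨⟨(x, f x), rfl⟩, rfl⟩
  · intro U hU
    rintro x ⟨⟨⟨a, b⟩, hb⟩, haU, rfl⟩
    simp only [Set.mem_setOf_eq] at hb
    subst hb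
    obtain ⟨W, hWopen, hWU⟩ := isOpen_induced_iff.mp hU
    have habW : (a, f a) ∈ W := by
      have := haU; rw [← hWU] at this; exact this
    obtain ⟨U', V, hU', hV, haU', hbV, hUVW⟩ := isOpen_prod_iff.mp hWopen a (f a) habW
    -- U' ∩ f⁻¹ V ⊆ image
    have hsub : U' ∩ f ⁻¹' V ⊆
        (fun p : {q : F × E | q.2 = f q.1} => (p : F × E).1) '' U := by
      rintro z ⟨hz1, hz2⟩
      refine ⟨⟨(z, f z), rfl⟩, ?_, rfl⟩
      rw [← hWU]
      exact hUVW ⟨hz1, hz2⟩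
    have hopen : IsOpen (U' ∩ interior (closure (f ⁻¹' V))) :=
      hU'.inter isOpen_interior
    have hmem : a ∈ U' ∩ interior (closure (f ⁻¹' V)) :=
      ⟨haU', hnc V hV hbV⟩
    have hcl : U' ∩ interior (closure (f ⁻¹' V)) ⊆
        closure ((fun p : {q : F × E | q.2 = f q.1} => (p : F × E).1) '' U) := by
      intro z hz
      have : z ∈ closure (U' ∩ f ⁻¹' V) :=
        hU'.inter_closure ⟨hz.1, interior_subset hz.2⟩
      exact closure_mono hsub this
    exact interior_maximal hcl hopen hmem
end

section
/- Let f : F → E be nearly continuous with closed graph, x ∈ F, and O an open neighborhood of f(x) such that f(U) ⊄ O for every neighborhood U of x. If W is an open set with f(x) ∈ W and closure(W) ⊆ O, then (E \ closure(W)) ∩ f(interior(closure(f⁻¹(W)))) ≠ ∅. -/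
theorem first_step_of_closed_graph_argument
    {F E : Type*} [TopologicalSpace F] [TopologicalSpace E] [T2Space E]
    (f : F → E)
    (hnc : NearlyContinuous f)
    (hgraph : IsClosed {q : F × E | q.2 = f q.1})
    (x : F) (O : Set E) (hO : IsOpen O) (hfxO : f x ∈ O)
    (hfail : ∀ U ∈ nhds x, ¬ f '' U ⊆ O)
    (W : Set E) (hW : IsOpen W) (hfxW : f x ∈ W) (hWO : closure W ⊆ O) :
    (((closure W)ᶜ) ∩ f '' interior (closure (f ⁻¹' W))).Nonempty := by
  have hU : interior (closure (f ⁻¹' W)) ∈ nhds x :=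
    mem_nhds_iff.mpr ⟨_, subset_rfl, isOpen_interior, hnc W hW hfxW⟩
  obtain ⟨y, hy1, hy2⟩ := Set.not_subset.mp (hfail _ hU)
  exact ⟨y, fun h => hy2 (hWO h), hy1⟩
end
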